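/- Let f: D^2 → A be unanimous and strategy-proof, and (a^1, ..., a^k) a path in G(D) with k ≥ 3. Suppose: (i) f(P_1,P_2) = a^1 whenever r_1(P_1) = a^1 and r_1(P_2) = a^2, and (ii) f(P_1,P_2) = a^2 whenever r_1(P_1) = a^2 and r_1(P_2) = a^k. Then f(P_1,P_2) = a^1 whenever r_1(P_1) = a^1 and r_1(P_2) = a^k. -/

import Mathlib

open Relation

/-- A preference is a ranking: a bijection from alternatives to ranks (0 = best). -/
abbrev Pref (A : Type*) [Fintype A] := A ≃ Fin (Fintype.card A)

namespace Pref

variable {A : Type*} [Fintype A]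

/-- The rank (as a natural number, 0 = best) of alternative `a` in preference `P`. -/
def rk (P : Pref A) (a : A) : ℕ := (P a : ℕ)

/-- The top-ranked alternative of `P`. -/
noncomputable def top [Nonempty A] (P : Pref A) : A := P.symm ⟨0, Fintype.card_pos⟩

/-- `a` is strictly preferred to `b` under `P`. -/
def SPrefers (P : Pref A) (a b : A) : Prop := rk P a < rk P b

/-- Two preferences are adjacent if they differ by one swap of consecutively
ranked alternatives. -/
def Adjacent (P P' : Pref A) : Prop :=
  ∃ a b : A, rk P a = rk P b + 1 ∧ rk P' a = rk P b ∧ rk P' b = rk P a ∧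
    ∀ c : A, c ≠ a → c ≠ b → rk P c = rk P' c

end Pref

open Pref

variable {A : Type*} [Fintype A] [Nonempty A]

/-- One step between members of the domain `D` along adjacent preferences. -/
def StepRel (D : Set (Pref A)) (P Q : Pref A) : Prop := P ∈ D ∧ Q ∈ D ∧ Adjacent P Q

/-- The domain `D` is connected: any two members are joined by a path of
adjacent preferences inside `D`. -/
def DConnected (D : Set (Pref A)) : Prop :=
  ∀ P ∈ D, ∀ Q ∈ D, ReflTransGen (StepRel D) P Q

/-- One step inside `D` along adjacent preferences keeping the same top. -/
def TStepRel (D : Set (Pref A)) (P Q : Pref A) : Prop :=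
  StepRel D P Q ∧ Pref.top P = Pref.top Q

/-- The top-connected closure of `P` in `D`. -/
def TCC (D : Set (Pref A)) (P : Pref A) : Set (Pref A) :=
  {Q | ReflTransGen (TStepRel D) P Q}

/-- Neighbours of a subset `S` inside the domain `D`. -/
def Nbr (D S : Set (Pref A)) : Set (Pref A) :=
  {Q | Q ∈ D ∧ Q ∉ S ∧ ∃ P ∈ S, Adjacent P Q}

/-- `D` is connected with two distinct neighbours. -/
def CDN (D : Set (Pref A)) : Prop :=
  DConnected D ∧
    ∀ P ∈ D, ∃ Q ∈ Nbr D (TCC D P), ∃ R ∈ Nbr D (TCC D P), Pref.top Q ≠ Pref.top R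

/-- Every alternative is top-ranked in some preference of `D`. -/
def MinimallyRich (D : Set (Pref A)) : Prop := ∀ a : A, ∃ P ∈ D, Pref.top P = a

/-- The edge relation of the induced graph `G(D)` on alternatives. -/
def EdgeD (D : Set (Pref A)) (a b : A) : Prop :=
  ∃ P ∈ D, ∃ P' ∈ D, Adjacent P P' ∧
    Pref.top P = a ∧ Pref.top P' = b ∧ rk P b = 1 ∧ rk P' a = 1

/-- `v 0, v 1, …, v (k-1)` is a path in the induced graph `G(D)`. -/
def IsPathD (D : Set (Pref A)) (k : ℕ) (v : ℕ → A) : Prop :=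
  (∀ i j, i < k → j < k → v i = v j → i = j) ∧
    ∀ i, i + 1 < k → EdgeD D (v i) (v (i + 1))

/-- Connected component of `P` in `D`. -/
def Component (D : Set (Pref A)) (P : Pref A) : Set (Pref A) :=
  {Q | Q ∈ D ∧ ReflTransGen (StepRel D) P Q}

section SCF

variable {n : ℕ} (D : Set (Pref A))

/-- Unanimity. -/
def Unanimous (f : (Fin n → D) → A) : Prop :=
  ∀ (P : Fin n → D) (a : A), (∀ i, Pref.top (P i : Pref A) = a) → f P = a

/-- Local strategy-proofness. -/
def LocallySP (f : (Fin n → D) → A) : Prop :=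
  ∀ (P : Fin n → D) (i : Fin n) (Q : D), Adjacent (P i : Pref A) (Q : Pref A) →
    ¬ SPrefers (P i : Pref A) (f (Function.update P i Q)) (f P)

/-- (Global) strategy-proofness. -/
def StrategyProof (f : (Fin n → D) → A) : Prop :=
  ∀ (P : Fin n → D) (i : Fin n) (Q : D),
    ¬ SPrefers (P i : Pref A) (f (Function.update P i Q)) (f P)

/-- Tops-onlyness. -/
def TopsOnly (f : (Fin n → D) → A) : Prop :=
  ∀ P P' : Fin n → D,
    (∀ i, Pref.top (P i : Pref A) = Pref.top (P' i : Pref A)) → f P = f P'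

/-- Dictatorship. -/
def Dictatorial (f : (Fin n → D) → A) : Prop :=
  ∃ i : Fin n, ∀ P : Fin n → D, f P = Pref.top (P i : Pref A)

/-- Voter `i` is decisive over `a`. -/
def Decisive (f : (Fin n → D) → A) (i : Fin n) (a : A) : Prop :=
  ∀ P : Fin n → D, Pref.top (P i : Pref A) = a → f P = a

end SCF

/-- Fact 1: decisiveness transfers along a path under unanimity and (global)
strategy-proofness. -/

lemma rk_of_top {A : Type*} [Fintype A] [Nonempty A] {P : Pref A} {a : A}
    (h : Pref.top P = a) : Pref.rk P a = 0 := by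
  subst h
  simp [Pref.rk, Pref.top]

lemma rk_inj {A : Type*} [Fintype A] {P : Pref A} {a b : A}
    (h : Pref.rk P a = Pref.rk P b) : a = b :=
  P.injective (Fin.ext h)

theorem stmt17 {A : Type*} [Fintype A] [Nonempty A] (hA : 3 ≤ Fintype.card A)
    (D : Set (Pref A)) (hmr : MinimallyRich D) (f : (Fin 2 → D) → A)
    (hu : Unanimous D f) (hsp : StrategyProof D f)
    (k : ℕ) (hk : 3 ≤ k) (v : ℕ → A) (hpath : IsPathD D k v)
    (h1 : ∀ P : Fin 2 → D, Pref.top (P 0 : Pref A) = v 0 →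
      Pref.top (P 1 : Pref A) = v 1 → f P = v 0)
    (h2 : ∀ P : Fin 2 → D, Pref.top (P 0 : Pref A) = v 1 →
      Pref.top (P 1 : Pref A) = v (k - 1) → f P = v 1) :
    ∀ P : Fin 2 → D, Pref.top (P 0 : Pref A) = v 0 →
      Pref.top (P 1 : Pref A) = v (k - 1) → f P = v 0 := by
  intro P hP0 hP1
  obtain ⟨hinj, hedge⟩ := hpath
  have h01 : v 0 ≠ v 1 := fun h => by have := hinj 0 1 (by omega) (by omega) h; omega
  obtain ⟨Pq, hq, Pr, hr, hadj, htq, htr, hrq1, hrr0⟩ := hedge 0 (by omega)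
  set Qd : D := ⟨Pq, hq⟩ with hQd
  set Rd : D := ⟨Pr, hr⟩ with hRd
  set PQ := Function.update P 0 Qd with hPQdef
  set PR := Function.update P 0 Rd with hPRdef
  have h10 : (1 : Fin 2) ≠ 0 := by decide
  have hPQ0 : (PQ 0 : Pref A) = Pq := by simp [hPQdef, hQd]
  have hPQ1 : PQ 1 = P 1 := by simp [hPQdef, Function.update_of_ne h10]
  have hPR0 : (PR 0 : Pref A) = Pr := by simp [hPRdef, hRd]
  have hPR1 : PR 1 = P 1 := by simp [hPRdef, Function.update_of_ne h10]
  -- f PR = v 1 by h2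
  have hfPR : f PR = v 1 := h2 PR (by rw [hPR0]; exact htr) (by rw [hPR1]; exact hP1)
  -- ranks in Pq
  have hq0 : Pref.rk Pq (v 0) = 0 := rk_of_top htq
  have hr1 : Pref.rk Pr (v 1) = 0 := rk_of_top htr
  -- SP at PQ deviating to Rd
  have hupd : Function.update PQ 0 Rd = PR := by
    rw [hPQdef, hPRdef, Function.update_idem]
  have hsp1 := hsp PQ 0 Qd
  have hsp2 := hsp PQ 0 Rd
  rw [hupd, hfPR] at hsp2
  rw [hPQ0] at hsp2
  have hle : Pref.rk Pq (f PQ) ≤ 1 := by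
    by_contra hlt
    exact hsp2 (by simpa [Pref.SPrefers, hrq1] using Nat.lt_of_not_le hlt)
  -- f PQ = v 0 or v 1
  have hcases : f PQ = v 0 ∨ f PQ = v 1 := by
    interval_cases h : Pref.rk Pq (f PQ)
    · exact Or.inl (rk_inj (h.trans hq0.symm))
    · exact Or.inr (rk_inj (h.trans hrq1.symm))
  have hfPQ : f PQ = v 0 := by
    rcases hcases with h | h
    · exact h
    · exfalso
      -- build profile (Qd, Rd)
      set PQ' := Function.update PQ 1 Rd with hPQ'def
      have hPQ'0 : (PQ' 0 : Pref A) = Pq := by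
        rw [hPQ'def, Function.update_of_ne (by decide : (0 : Fin 2) ≠ 1)]
        exact hPQ0
      have hPQ'1 : (PQ' 1 : Pref A) = Pr := by simp [hPQ'def, hRd]
      have hfPQ' : f PQ' = v 0 := h1 PQ' (by rw [hPQ'0]; exact htq) (by rw [hPQ'1]; exact htr)
      have hback : Function.update PQ' 1 (P 1) = PQ := by
        rw [hPQ'def, Function.update_idem, ← hPQ1, Function.update_eq_self]
      have hsp3 := hsp PQ' 1 (P 1)
      rw [hback, h, hfPQ'] at hsp3
      rw [hPQ'1] at hsp3
      exact hsp3 (by simp [Pref.SPrefers, hr1, hrr0])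
  -- final SP step for voter 0
  have hsp4 := hsp P 0 Qd
  rw [← hPQdef, hfPQ] at hsp4
  have hp00 : Pref.rk (P 0 : Pref A) (v 0) = 0 := rk_of_top hP0
  have : Pref.rk (P 0 : Pref A) (f P) = 0 := by
    by_contra hne
    exact hsp4 (by simp [Pref.SPrefers, hp00]; omega)
  exact rk_inj (this.trans hp00.symm)
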